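/- Let a ∈ P_{m,n}, b ∈ P_{n,t}, X a Finset of Fin m and Y a Finset of Fin t. Then the number of Finsets Z of Fin n that are intertwining sets for (a,b) with respect to (X,Y) equals 2^{Φ(a,b)} if (X,Y) is a union of ab-blocks, and equals 0 otherwise. -/

import Mathlib

open Classical

/-- A partition in `P_{m,n}`: an equivalence relation on `Fin m ⊕ Fin n`. -/
abbrev Ptn (m n : ℕ) := Setoid (Fin m ⊕ Fin n)

/-- `(X,Y)` is a union of `a`-blocks. -/
def IsUnionOfBlocks {m n : ℕ} (a : Ptn m n) (X : Finset (Fin m)) (Y : Finset (Fin n)) :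
    Prop :=
  ∀ u v, a u v →
    (u ∈ Sum.inl '' (X : Set (Fin m)) ∪ Sum.inr '' (Y : Set (Fin n)) ↔
     v ∈ Sum.inl '' (X : Set (Fin m)) ∪ Sum.inr '' (Y : Set (Fin n)))

/-- The zero-one matrix `ā` associated to a partition `a`. -/
noncomputable def ptnMatrix (K : Type) [Semiring K] {m n : ℕ} (a : Ptn m n) :
    Matrix (Finset (Fin m)) (Finset (Fin n)) K :=
  Matrix.of fun X Y => if IsUnionOfBlocks a X Y then (1 : K) else 0

/-- The involution `a*` of a partition. -/
def ptnStar {m n : ℕ} (a : Ptn m n) : Ptn n m :=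
  Setoid.comap Sum.swap a

/-- First projection used to define the tensor sum. -/
def tensorProj₁ {m n s t : ℕ} :
    (Fin m ⊕ Fin s) ⊕ (Fin n ⊕ Fin t) → Option (Fin m ⊕ Fin n)
  | Sum.inl (Sum.inl i) => some (Sum.inl i)
  | Sum.inl (Sum.inr _) => none
  | Sum.inr (Sum.inl j) => some (Sum.inr j)
  | Sum.inr (Sum.inr _) => none

/-- Second projection used to define the tensor sum. -/
def tensorProj₂ {m n s t : ℕ} :
    (Fin m ⊕ Fin s) ⊕ (Fin n ⊕ Fin t) → Option (Fin s ⊕ Fin t)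
  | Sum.inl (Sum.inl _) => none
  | Sum.inl (Sum.inr i) => some (Sum.inl i)
  | Sum.inr (Sum.inl _) => none
  | Sum.inr (Sum.inr j) => some (Sum.inr j)

/-- The tensor sum `a ⊞ b` of partitions. -/
def ptnTensor {m n s t : ℕ} (a : Ptn m n) (b : Ptn s t) : Ptn (m + s) (n + t) :=
  Setoid.comap (Sum.map finSumFinEquiv.symm finSumFinEquiv.symm)
    (Relation.EqvGen.setoid fun u v =>
      (∃ p q, tensorProj₁ u = some p ∧ tensorProj₁ v = some q ∧ a p q) ∨
      (∃ p q, tensorProj₂ u = some p ∧ tensorProj₂ v = some q ∧ b p q))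

/-- The generating relation of the product graph `Π(a,b)`. -/
def prodGen {m n t : ℕ} (a : Ptn m n) (b : Ptn n t) :
    (Fin m ⊕ Fin n ⊕ Fin t) → (Fin m ⊕ Fin n ⊕ Fin t) → Prop :=
  fun u v =>
    (∃ p q, a p q ∧ u = Sum.map id Sum.inl p ∧ v = Sum.map id Sum.inl q) ∨
    (∃ p q, b p q ∧ u = Sum.inr p ∧ v = Sum.inr q)

/-- The equivalence `∼` on `Fin m ⊕ Fin n ⊕ Fin t` generated by `a` and `b`. -/
def prodSetoid {m n t : ℕ} (a : Ptn m n) (b : Ptn n t) :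
    Setoid (Fin m ⊕ Fin n ⊕ Fin t) :=
  Relation.EqvGen.setoid (prodGen a b)

/-- The product `ab` of composable partitions. -/
def ptnMul {m n t : ℕ} (a : Ptn m n) (b : Ptn n t) : Ptn m t :=
  Setoid.comap (Sum.map id Sum.inr) (prodSetoid a b)

/-- The twisting number `Φ(a,b)`: the number of `∼`-classes contained in the middle copy. -/
noncomputable def Phi {m n t : ℕ} (a : Ptn m n) (b : Ptn n t) : ℕ :=
  Nat.card {C : Quotient (prodSetoid a b) //
    ∀ u, Quotient.mk (prodSetoid a b) u = C → ∃ j : Fin n, u = Sum.inr (Sum.inl j)}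

/-- The identity partition `ι_n`. -/
def idPtn (n : ℕ) : Ptn n n :=
  Relation.EqvGen.setoid fun u v => ∃ i : Fin n, u = Sum.inl i ∧ v = Sum.inr i

/-- `X` is a union of `ker(a)`-classes. -/
def KerClosed {m n : ℕ} (a : Ptn m n) (X : Finset (Fin m)) : Prop :=
  ∀ x ∈ X, ∀ i : Fin m, a (Sum.inl x) (Sum.inl i) → i ∈ X

/-- `Y` is a union of `coker(a)`-classes. -/
def CokerClosed {m n : ℕ} (a : Ptn m n) (Y : Finset (Fin n)) : Prop :=
  ∀ y ∈ Y, ∀ j : Fin n, a (Sum.inr y) (Sum.inr j) → j ∈ Y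

/-- The image `Xa` of `X` under `a`. -/
noncomputable def ptnImage {m n : ℕ} (a : Ptn m n) (X : Finset (Fin m)) :
    Finset (Fin n) :=
  Finset.univ.filter fun j => ∃ x ∈ X, a (Sum.inl x) (Sum.inr j)

/-- The preimage `aY` of `Y` under `a`. -/
noncomputable def ptnPreimage {m n : ℕ} (a : Ptn m n) (Y : Finset (Fin n)) :
    Finset (Fin m) :=
  Finset.univ.filter fun i => ∃ y ∈ Y, a (Sum.inl i) (Sum.inr y)

/-- `Z` is an intertwining set for `(a,b)` with respect to `(X,Y)`. -/
def Intertwining {m n t : ℕ} (a : Ptn m n) (b : Ptn n t)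
    (X : Finset (Fin m)) (Y : Finset (Fin t)) (Z : Finset (Fin n)) : Prop :=
  IsUnionOfBlocks a X Z ∧ IsUnionOfBlocks b Z Y

/-- A Brauer partition: every block has exactly two elements. -/
def IsBrauer {m n : ℕ} (a : Ptn m n) : Prop :=
  ∀ u : Fin m ⊕ Fin n, Nat.card {v // a u v} = 2

/-- The clockwise boundary order on the vertices of a diagram. -/
def beta (m n : ℕ) : Fin m ⊕ Fin n → ℕ
  | Sum.inl i => (i : ℕ)
  | Sum.inr j => m + n - 1 - (j : ℕ)

/-- A Temperley–Lieb partition: a planar (non-crossing) Brauer partition. -/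
def IsTL {m n : ℕ} (a : Ptn m n) : Prop :=
  IsBrauer a ∧
    ¬ ∃ u v p q : Fin m ⊕ Fin n, a u v ∧ a p q ∧
        beta m n u < beta m n p ∧ beta m n p < beta m n v ∧ beta m n v < beta m n q

/-- The domain of a partition: upper vertices lying in transversal blocks. -/
noncomputable def ptnDom {m n : ℕ} (a : Ptn m n) : Finset (Fin m) :=
  Finset.univ.filter fun i => ∃ j : Fin n, a (Sum.inl i) (Sum.inr j)

/-- The codomain of a partition: lower vertices lying in transversal blocks. -/
noncomputable def ptnCodom {m n : ℕ} (a : Ptn m n) : Finset (Fin n) :=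
  Finset.univ.filter fun j => ∃ i : Fin m, a (Sum.inl i) (Sum.inr j)

/-- The rank of a partition: the number of transversal blocks. -/
noncomputable def ptnRank {m n : ℕ} (a : Ptn m n) : ℕ :=
  Nat.card {C : Quotient a // ∃ (i : Fin m) (j : Fin n),
    Quotient.mk a (Sum.inl i) = C ∧ Quotient.mk a (Sum.inr j) = C}

/-- An even-gap subset of `Fin n`. -/
def IsEvenGap {n : ℕ} (X : Finset (Fin n)) : Prop :=
  X.card ≡ n [MOD 2] ∧
    ∀ (k : ℕ) (h : k < (X.sort (· ≤ ·)).length),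
      (((X.sort (· ≤ ·)).get ⟨k, h⟩ : ℕ) + 1) ≡ (k + 1) [MOD 2]

/-- The reduced (even-gap) matrix of a partition. -/
noncomputable def tlMatrix (K : Type) [Semiring K] {m n : ℕ} (a : Ptn m n) :
    Matrix {X : Finset (Fin m) // IsEvenGap X} {Y : Finset (Fin n) // IsEvenGap Y} K :=
  Matrix.of fun X Y => if IsUnionOfBlocks a X.1 Y.1 then (1 : K) else 0

/-- The standard basis vector `e_X` of `V_n`. -/
def eVec (K : Type) [Semiring K] {n : ℕ} (X : Finset (Fin n)) :
    Finset (Fin n) → K :=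
  Pi.single X 1

/-- The subspace `V_n⁺`. -/
def Vplus (K : Type) [Field K] (n : ℕ) : Submodule K (Finset (Fin n) → K) :=
  Submodule.span K (Set.range fun X : Finset (Fin n) => eVec K X + eVec K Xᶜ)

/-- The subspace `V_n⁻`. -/
def Vminus (K : Type) [Field K] (n : ℕ) : Submodule K (Finset (Fin n) → K) :=
  Submodule.span K (Set.range fun X : Finset (Fin n) => eVec K X - eVec K Xᶜ)

section CIAux

variable {m n t : ℕ} (a : Ptn m n) (b : Ptn n t)
  (X : Finset (Fin m)) (Y : Finset (Fin t))

/-- The subset of the product graph determined by `(X,Z,Y)`. -/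
def CI_SP (Z : Finset (Fin n)) : Fin m ⊕ Fin n ⊕ Fin t → Prop
  | Sum.inl i => i ∈ X
  | Sum.inr (Sum.inl j) => j ∈ Z
  | Sum.inr (Sum.inr k) => k ∈ Y

lemma CI_memU_inl {α β : Type*} (X : Finset α) (Y : Finset β) (i : α) :
    (Sum.inl i ∈ Sum.inl '' (X : Set α) ∪ Sum.inr '' (Y : Set β)) ↔ i ∈ X := by
  simp

lemma CI_memU_inr {α β : Type*} (X : Finset α) (Y : Finset β) (j : β) :
    (Sum.inr j ∈ Sum.inl '' (X : Set α) ∪ Sum.inr '' (Y : Set β)) ↔ j ∈ Y := by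
  simp

lemma CI_tr1 (Z : Finset (Fin n)) (p : Fin m ⊕ Fin n) :
    CI_SP X Y Z (Sum.map id Sum.inl p) ↔
      p ∈ Sum.inl '' (X : Set (Fin m)) ∪ Sum.inr '' (Z : Set (Fin n)) := by
  cases p with
  | inl i => simpa [CI_SP] using (CI_memU_inl X Z i).symm
  | inr j => simpa [CI_SP] using (CI_memU_inr X Z j).symm

lemma CI_tr2 (Z : Finset (Fin n)) (p : Fin n ⊕ Fin t) :
    CI_SP X Y Z (Sum.inr p) ↔
      p ∈ Sum.inl '' (Z : Set (Fin n)) ∪ Sum.inr '' (Y : Set (Fin t)) := by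
  cases p with
  | inl j => simpa [CI_SP] using (CI_memU_inl Z Y j).symm
  | inr k => simpa [CI_SP] using (CI_memU_inr Z Y k).symm

lemma CI_tr3 (Z : Finset (Fin n)) (w : Fin m ⊕ Fin t) :
    CI_SP X Y Z (Sum.map id Sum.inr w) ↔
      w ∈ Sum.inl '' (X : Set (Fin m)) ∪ Sum.inr '' (Y : Set (Fin t)) := by
  cases w with
  | inl i => simpa [CI_SP] using (CI_memU_inl X Y i).symm
  | inr k => simpa [CI_SP] using (CI_memU_inr X Y k).symm

/-- Intertwining is equivalent to saturation of `CI_SP` under `∼`. -/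
lemma CI_sat_iff (Z : Finset (Fin n)) :
    Intertwining a b X Y Z ↔
      ∀ u v, prodSetoid a b u v → (CI_SP X Y Z u ↔ CI_SP X Y Z v) := by
  constructor
  · rintro ⟨h1, h2⟩ u v huv
    induction huv with
    | rel u v h =>
      rcases h with ⟨p, q, hpq, rfl, rfl⟩ | ⟨p, q, hpq, rfl, rfl⟩
      · rw [CI_tr1, CI_tr1]; exact h1 p q hpq
      · rw [CI_tr2, CI_tr2]; exact h2 p q hpq
    | refl u => exact Iff.rfl
    | symm _ _ _ ih => exact ih.symm
    | trans _ _ _ _ _ ih1 ih2 => exact ih1.trans ih2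
  · intro hs
    constructor
    · intro p q hpq
      have := hs _ _ (Relation.EqvGen.rel _ _ (Or.inl ⟨p, q, hpq, rfl, rfl⟩))
      rwa [CI_tr1, CI_tr1] at this
    · intro p q hpq
      have := hs _ _ (Relation.EqvGen.rel _ _ (Or.inr ⟨p, q, hpq, rfl, rfl⟩))
      rwa [CI_tr2, CI_tr2] at this

/-- A `∼`-class contained in the middle copy. -/
def CI_Mid (C : Quotient (prodSetoid a b)) : Prop :=
  ∀ u, Quotient.mk (prodSetoid a b) u = C → ∃ j : Fin n, u = Sum.inr (Sum.inl j)

/-- Any intertwining set forces `(X,Y)` to be a union of `ab`-blocks. -/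
lemma CI_forces (Z : Finset (Fin n)) (hZ : Intertwining a b X Y Z) :
    IsUnionOfBlocks (ptnMul a b) X Y := by
  intro u v huv
  have hs := (CI_sat_iff a b X Y Z).mp hZ _ _ huv
  rwa [CI_tr3, CI_tr3] at hs

open Classical in
/-- The saturated class function built from a choice on middle classes. -/
noncomputable def CI_g (f : {C : Quotient (prodSetoid a b) // CI_Mid a b C} → Prop)
    (C : Quotient (prodSetoid a b)) : Prop :=
  if hc : CI_Mid a b C then f ⟨C, hc⟩
  else ∃ w : Fin m ⊕ Fin t,
    Quotient.mk (prodSetoid a b) (Sum.map id Sum.inr w) = C ∧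
      w ∈ Sum.inl '' (X : Set (Fin m)) ∪ Sum.inr '' (Y : Set (Fin t))

noncomputable def CI_Z (f : {C : Quotient (prodSetoid a b) // CI_Mid a b C} → Prop) :
    Finset (Fin n) :=
  Finset.univ.filter fun j => CI_g a b X Y f (Quotient.mk (prodSetoid a b) (Sum.inr (Sum.inl j)))

variable (h : IsUnionOfBlocks (ptnMul a b) X Y)

include h in
lemma CI_g_notmid (f : {C : Quotient (prodSetoid a b) // CI_Mid a b C} → Prop)
    (w : Fin m ⊕ Fin t) :
    CI_g a b X Y f (Quotient.mk (prodSetoid a b) (Sum.map id Sum.inr w)) ↔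
      w ∈ Sum.inl '' (X : Set (Fin m)) ∪ Sum.inr '' (Y : Set (Fin t)) := by
  have hnm : ¬ CI_Mid a b (Quotient.mk (prodSetoid a b) (Sum.map id Sum.inr w)) := by
    intro hc
    obtain ⟨j, hj⟩ := hc _ rfl
    cases w <;> simp [Sum.map] at hj
  rw [CI_g, dif_neg hnm]
  constructor
  · rintro ⟨w', hw', hw'U⟩
    have hrel := Quotient.exact hw'
    exact (h w' w hrel).mp hw'U
  · intro hw
    exact ⟨w, rfl, hw⟩

include h in
lemma CI_SP_Z (f : {C : Quotient (prodSetoid a b) // CI_Mid a b C} → Prop)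
    (u : Fin m ⊕ Fin n ⊕ Fin t) :
    CI_SP X Y (CI_Z a b X Y f) u ↔ CI_g a b X Y f (Quotient.mk (prodSetoid a b) u) := by
  cases u with
  | inl i =>
    have := CI_g_notmid a b X Y h f (Sum.inl i)
    rw [Sum.map_inl, id_eq] at this
    rw [this]
    show (i ∈ X) ↔ _
    exact (CI_memU_inl X Y i).symm
  | inr p =>
    cases p with
    | inl j =>
      show j ∈ CI_Z a b X Y f ↔ _
      simp [CI_Z]
    | inr k =>
      have := CI_g_notmid a b X Y h f (Sum.inr k)
      rw [Sum.map_inr] at this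
      rw [this]
      show (k ∈ Y) ↔ _
      exact (CI_memU_inr X Y k).symm

include h in
lemma CI_Z_int (f : {C : Quotient (prodSetoid a b) // CI_Mid a b C} → Prop) :
    Intertwining a b X Y (CI_Z a b X Y f) := by
  rw [CI_sat_iff]
  intro u v huv
  rw [CI_SP_Z a b X Y h f, CI_SP_Z a b X Y h f, Quotient.sound huv]

end CIAux

/-- the number of intertwining sets for `(a,b)` with respect to `(X,Y)`
is `2^{Φ(a,b)}` if `(X,Y)` is a union of `ab`-blocks, and `0` otherwise. -/
theorem card_intertwining {m n t : ℕ} (a : Ptn m n) (b : Ptn n t)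
    (X : Finset (Fin m)) (Y : Finset (Fin t)) :
    Nat.card {Z : Finset (Fin n) // Intertwining a b X Y Z} =
      if IsUnionOfBlocks (ptnMul a b) X Y then 2 ^ Phi a b else 0 := by
  by_cases hu : IsUnionOfBlocks (ptnMul a b) X Y
  · rw [if_pos hu]
    have e : {Z : Finset (Fin n) // Intertwining a b X Y Z} ≃
        ({C : Quotient (prodSetoid a b) // CI_Mid a b C} → Prop) := by
      refine
        { toFun := fun Z C => ∃ j : Fin n,
            Quotient.mk (prodSetoid a b) (Sum.inr (Sum.inl j)) = C.1 ∧ j ∈ Z.1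
          invFun := fun f => ⟨CI_Z a b X Y f, CI_Z_int a b X Y hu f⟩
          left_inv := ?_
          right_inv := ?_ }
      · rintro ⟨Z, hZ⟩
        apply Subtype.ext
        ext j
        simp only [CI_Z, Finset.mem_filter, Finset.mem_univ, true_and]
        by_cases hc : CI_Mid a b (Quotient.mk (prodSetoid a b) (Sum.inr (Sum.inl j)))
        · rw [CI_g, dif_pos hc]
          constructor
          · rintro ⟨j', hq, hj'⟩
            have sat := (CI_sat_iff a b X Y Z).mp hZ _ _ (Quotient.exact hq)
            exact sat.mp hj'
          · intro hj
            exact ⟨j, rfl, hj⟩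
        · rw [CI_g, dif_neg hc]
          constructor
          · rintro ⟨w, hq, hwU⟩
            have sat := (CI_sat_iff a b X Y Z).mp hZ _ _ (Quotient.exact hq)
            rw [CI_tr3] at sat
            exact sat.mp hwU
          · intro hj
            rw [CI_Mid] at hc
            push_neg at hc
            obtain ⟨u, hu1, hu2⟩ := hc
            have key : ∀ w : Fin m ⊕ Fin t,
                Quotient.mk (prodSetoid a b) (Sum.map id Sum.inr w) =
                  Quotient.mk (prodSetoid a b) (Sum.inr (Sum.inl j)) →
                (∃ w' : Fin m ⊕ Fin t,
                  Quotient.mk (prodSetoid a b) (Sum.map id Sum.inr w') =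
                    Quotient.mk (prodSetoid a b) (Sum.inr (Sum.inl j)) ∧
                  w' ∈ Sum.inl '' (X : Set (Fin m)) ∪ Sum.inr '' (Y : Set (Fin t))) := by
              intro w hq
              have sat := (CI_sat_iff a b X Y Z).mp hZ _ _ (Quotient.exact hq)
              rw [CI_tr3] at sat
              exact ⟨w, hq, sat.mpr hj⟩
            cases u with
            | inl i => exact key (Sum.inl i) (by simpa using hu1)
            | inr p =>
              cases p with
              | inl j' => exact absurd rfl (hu2 j')
              | inr k => exact key (Sum.inr k) (by simpa using hu1)
      · intro f
        funext C
        rcases C with ⟨C, hC⟩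
        obtain ⟨u, hu'⟩ := Quotient.exists_rep C
        obtain ⟨j₀, rfl⟩ := hC u hu'
        apply propext
        constructor
        · rintro ⟨j, hq, hj⟩
          simp only [CI_Z, Finset.mem_filter, Finset.mem_univ, true_and] at hj
          rw [hq] at hj
          rwa [CI_g, dif_pos hC] at hj
        · intro hf
          refine ⟨j₀, hu', ?_⟩
          simp only [CI_Z, Finset.mem_filter, Finset.mem_univ, true_and]
          rw [hu', CI_g, dif_pos hC]
          exact hf
    rw [Nat.card_congr e, Nat.card_fun, Nat.card_eq_fintype_card, Fintype.card_prop]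
    rfl
  · rw [if_neg hu]
    have : IsEmpty {Z : Finset (Fin n) // Intertwining a b X Y Z} :=
      ⟨fun Z => hu (CI_forces a b X Y Z.1 Z.2)⟩
    exact Nat.card_of_isEmpty
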